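/- (Deterministic core of Theorem 3.1.) Let N ≥ 1 and 1 ≤ ℓ < n, and let X be an order-N real tensor with all modes of size n. For each j = 1, …, N, let Q_j : Matrix (Fin n) (Fin ℓ) ℝ have orthonormal columns (Q_jᵀ Q_j = I_ℓ), let P_j : Matrix (Fin n) (Fin ℓ) ℝ be a selection matrix with P_jᵀ Q_j invertible, and set Π_j = Q_j (P_jᵀ Q_j)⁻¹ P_jᵀ. Suppose g ≥ 1 satisfies ‖(P_jᵀ Q_j)⁻¹‖₂ ≤ g for all j. Then ‖X − X ×₁ Π₁ ×₂ Π₂ ⋯ ×_N Π_N‖_F ≤ ∑_{j=1}^{N} g^j · ‖(I − Q_j Q_jᵀ) · X₍j₎‖_F, where X₍j₎ denotes the mode-j unfolding of X. -/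

import Mathlib

open Matrix Finset

/-- The mode-`j` product of an order-`N` tensor with all modes of size `n`
with a square matrix `A`: `(X ×_j A)(i) = ∑ k, A (i j) k * X (i[j ↦ k])`. -/
def mprod {N n : ℕ} (X : (Fin N → Fin n) → ℝ) (j : Fin N)
    (A : Matrix (Fin n) (Fin n) ℝ) : (Fin N → Fin n) → ℝ :=
  fun i => ∑ k : Fin n, A (i j) k * X (Function.update i j k)

/-- `prodUpTo X Pr j = X ×₁ Pr 1 ×₂ Pr 2 ⋯ ×_j Pr j`, the successive mode products
along the first `j` modes. -/
def prodUpTo {N n : ℕ} (X : (Fin N → Fin n) → ℝ)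
    (Pr : Fin N → Matrix (Fin n) (Fin n) ℝ) : ℕ → ((Fin N → Fin n) → ℝ)
  | 0 => X
  | j + 1 =>
    if h : j < N then mprod (prodUpTo X Pr j) ⟨j, h⟩ (Pr ⟨j, h⟩)
    else prodUpTo X Pr j

/-- The Frobenius norm of an order-`N` tensor with all modes of size `n`. -/
noncomputable def frobT {N n : ℕ} (X : (Fin N → Fin n) → ℝ) : ℝ :=
  Real.sqrt (∑ i, X i ^ 2)

/-- The mode-`j` unfolding of a tensor with all modes of size `n`. -/
def unfold {N n : ℕ} (X : (Fin N → Fin n) → ℝ) (j : Fin N) :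
    Matrix (Fin n) ({k : Fin N // k ≠ j} → Fin n) ℝ :=
  fun a c => X (fun l => if h : l = j then a else c ⟨l, h⟩)

/-- The Frobenius norm of a matrix. -/
noncomputable def frobM {m n : Type*} [Fintype m] [Fintype n] (A : Matrix m n ℝ) : ℝ :=
  Real.sqrt (∑ i, ∑ j, A i j ^ 2)

/-- The spectral norm of a matrix: the operator norm of the induced linear map
from `ℓ²` to `ℓ²`, i.e. the largest singular value. -/
noncomputable def matSpectralNorm {m n : ℕ} (A : Matrix (Fin m) (Fin n) ℝ) : ℝ :=
  ‖LinearMap.toContinuousLinearMap (Matrix.toEuclideanLin A)‖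

/-- `P` is a selection matrix: its columns are distinct columns of the identity matrix. -/
def IsSelectionMatrix {n ℓ : ℕ} (P : Matrix (Fin n) (Fin ℓ) ℝ) : Prop :=
  ∃ p : Fin ℓ → Fin n, Function.Injective p ∧
    ∀ i a, P i a = if i = p a then 1 else 0

/-!
Write `Πⱼ = Qⱼ (PⱼᵀQⱼ)⁻¹ Pⱼᵀ`. The error telescopes as
`X - X ×₁ Π₁ ⋯ ×_N Π_N = ∑ⱼ (X ×₁ Π₁ ⋯ ×_{j-1} Π_{j-1}) ×ⱼ (I - Πⱼ)`.
Since `Πⱼ` fixes the range of `Qⱼ`, `I - Πⱼ = (I - Πⱼ)(I - QⱼQⱼᵀ)`, and on the orthogonal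
complement of that range `I - Πⱼ` has norm at most `‖(PⱼᵀQⱼ)⁻¹‖₂ ≤ g`; every `Πₖ` has norm
at most `g` as well. Mode products along different modes commute, and a mode product with a
matrix of spectral norm `c` scales the Frobenius norm by at most `c`, so the `j`-th term is at
most `g ^ j ‖(I - QⱼQⱼᵀ) X₍ⱼ₎‖_F`.
-/

open scoped Matrix.Norms.L2Operator

section DotProduct

variable {ι κ : Type*} [Fintype ι] [Fintype κ]

theorem dotProduct_self_eq_norm_sq (v : ι → ℝ) : v ⬝ᵥ v = ‖WithLp.toLp 2 v‖ ^ 2 := by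
  rw [← real_inner_self_eq_norm_sq, EuclideanSpace.inner_eq_star_dotProduct, star_trivial]

theorem real_dotProduct_self_nonneg (v : ι → ℝ) : 0 ≤ v ⬝ᵥ v := by
  rw [dotProduct_self_eq_norm_sq]
  positivity

theorem sq_dotProduct_le (v w : ι → ℝ) : (v ⬝ᵥ w) ^ 2 ≤ (v ⬝ᵥ v) * (w ⬝ᵥ w) := by
  simpa only [dotProduct, sq] using Finset.sum_mul_sq_le_sq_mul_sq Finset.univ v w

theorem sub_dotProduct_sub_self (v w : ι → ℝ) :
    (v - w) ⬝ᵥ (v - w) = v ⬝ᵥ v - 2 * (v ⬝ᵥ w) + w ⬝ᵥ w := by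
  rw [sub_dotProduct, dotProduct_sub, dotProduct_sub, dotProduct_comm w v]
  ring

theorem mulVec_dotProduct (A : Matrix ι κ ℝ) (x : κ → ℝ) (y : ι → ℝ) :
    (A *ᵥ x) ⬝ᵥ y = x ⬝ᵥ (Aᵀ *ᵥ y) := by
  rw [mulVec_transpose, dotProduct_comm, dotProduct_mulVec, dotProduct_comm]

theorem mulVec_dotProduct_mulVec_self_of_transpose_mul_self [DecidableEq κ]
    {Q : Matrix ι κ ℝ} (hQ : Qᵀ * Q = 1) (u : κ → ℝ) : (Q *ᵥ u) ⬝ᵥ (Q *ᵥ u) = u ⬝ᵥ u := by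
  rw [mulVec_dotProduct, mulVec_mulVec, hQ, one_mulVec]

theorem mulVec_dotProduct_mulVec_self_le [DecidableEq κ] (A : Matrix ι κ ℝ) (v : κ → ℝ) :
    (A *ᵥ v) ⬝ᵥ (A *ᵥ v) ≤ ‖A‖ ^ 2 * (v ⬝ᵥ v) := by
  rw [dotProduct_self_eq_norm_sq, dotProduct_self_eq_norm_sq, ← mul_pow]
  gcongr
  exact A.l2_opNorm_mulVec (WithLp.toLp 2 v)

end DotProduct

section L2OpNorm

variable {ι κ : Type*} [Fintype ι] [Fintype κ] [DecidableEq κ]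

theorem matSpectralNorm_eq_l2_opNorm {m n : ℕ} (A : Matrix (Fin m) (Fin n) ℝ) :
    matSpectralNorm A = ‖A‖ :=
  rfl

theorem Matrix.l2_opNorm_transpose [DecidableEq ι] (A : Matrix ι κ ℝ) : ‖Aᵀ‖ = ‖A‖ := by
  rw [← conjTranspose_eq_transpose_of_trivial, l2_opNorm_conjTranspose]

theorem Matrix.l2_opNorm_one_le : ‖(1 : Matrix κ κ ℝ)‖ ≤ 1 := by
  rw [cstar_norm_def, map_one]
  exact ContinuousLinearMap.norm_id_le

theorem Matrix.l2_opNorm_le_one_of_transpose_mul_self {Q : Matrix ι κ ℝ} (hQ : Qᵀ * Q = 1) :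
    ‖Q‖ ≤ 1 := by
  have h : ‖Q‖ * ‖Q‖ ≤ 1 := by
    rw [← l2_opNorm_conjTranspose_mul_self, conjTranspose_eq_transpose_of_trivial, hQ]
    exact l2_opNorm_one_le
  nlinarith [norm_nonneg Q]

theorem Matrix.l2_opNorm_mul_le_of_transpose_mul_self {Q : Matrix ι κ ℝ} (hQ : Qᵀ * Q = 1)
    {l : Type*} [Fintype l] [DecidableEq l] (A : Matrix κ l ℝ) : ‖Q * A‖ ≤ ‖A‖ :=
  calc ‖Q * A‖ ≤ ‖Q‖ * ‖A‖ := l2_opNorm_mul Q A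
    _ ≤ 1 * ‖A‖ := by grw [l2_opNorm_le_one_of_transpose_mul_self hQ]
    _ = ‖A‖ := one_mul _

end L2OpNorm

theorem IsSelectionMatrix.transpose_mul_self {n ℓ : ℕ} {P : Matrix (Fin n) (Fin ℓ) ℝ}
    (hP : IsSelectionMatrix P) : Pᵀ * P = 1 := by
  obtain ⟨p, hp_inj, hp⟩ := hP
  ext a b
  simp [mul_apply, hp, one_apply, hp_inj.eq_iff, eq_comm]

section ObliqueProjection

variable {m l : Type*} [Fintype m] [Fintype l] [DecidableEq l]
  {Q P : Matrix m l ℝ}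

theorem l2_opNorm_obliqueProj_le [DecidableEq m] (hQ : Qᵀ * Q = 1) (hP : Pᵀ * P = 1) :
    ‖Q * (Pᵀ * Q)⁻¹ * Pᵀ‖ ≤ ‖(Pᵀ * Q)⁻¹‖ :=
  calc ‖Q * (Pᵀ * Q)⁻¹ * Pᵀ‖ ≤ ‖(Pᵀ * Q)⁻¹‖ * ‖Pᵀ‖ := by
        grw [Matrix.mul_assoc, l2_opNorm_mul_le_of_transpose_mul_self hQ, l2_opNorm_mul]
    _ ≤ ‖(Pᵀ * Q)⁻¹‖ * 1 := by
        grw [l2_opNorm_transpose, l2_opNorm_le_one_of_transpose_mul_self hP]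
    _ = ‖(Pᵀ * Q)⁻¹‖ := mul_one _

theorem obliqueProj_mulVec_dotProduct_self_le [DecidableEq m] (hQ : Qᵀ * Q = 1)
    (hP : Pᵀ * P = 1) {g : ℝ} (hG : ‖(Pᵀ * Q)⁻¹‖ ≤ g) (v : m → ℝ) :
    ((Q * (Pᵀ * Q)⁻¹ * Pᵀ) *ᵥ v) ⬝ᵥ ((Q * (Pᵀ * Q)⁻¹ * Pᵀ) *ᵥ v) ≤ g ^ 2 * (v ⬝ᵥ v) := by
  grw [mulVec_dotProduct_mulVec_self_le, l2_opNorm_obliqueProj_le hQ hP, hG] <;>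
    exact real_dotProduct_self_nonneg v

theorem obliqueProj_mul_orthProj [Invertible (Pᵀ * Q)] :
    Q * (Pᵀ * Q)⁻¹ * Pᵀ * (Q * Qᵀ) = Q * Qᵀ := by
  rw [Matrix.mul_assoc, ← Matrix.mul_assoc Pᵀ, ← Matrix.mul_assoc, Matrix.mul_assoc Q,
    inv_mul_of_invertible, Matrix.mul_one]

variable {g : ℝ}

/-- For `u = (PᵀQ)⁻¹ Pᵀ w`, the test vector `y = P (PᵀQ)⁻ᵀ u` satisfies `⟨y - Qu, w⟩ = ‖u‖²`
and `‖y - Qu‖² = ‖y‖² - ‖u‖² ≤ (g² - 1) ‖u‖²`; apply Cauchy–Schwarz. -/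
theorem obliqueCoeff_dotProduct_self_le_of_orthogonal [DecidableEq m] (hQ : Qᵀ * Q = 1)
    (hP : Pᵀ * P = 1) [Invertible (Pᵀ * Q)] (hg1 : 1 ≤ g) (hG : ‖(Pᵀ * Q)⁻¹‖ ≤ g) {w : m → ℝ}
    (hw : Qᵀ *ᵥ w = 0) :
    (((Pᵀ * Q)⁻¹ * Pᵀ) *ᵥ w) ⬝ᵥ (((Pᵀ * Q)⁻¹ * Pᵀ) *ᵥ w) ≤ (g ^ 2 - 1) * (w ⬝ᵥ w) := by
  set G := (Pᵀ * Q)⁻¹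
  set u := (G * Pᵀ) *ᵥ w
  set y := (P * Gᵀ) *ᵥ u
  have hQy : Qᵀ *ᵥ y = u := by
    have : Qᵀ * (P * Gᵀ) = (G * (Pᵀ * Q))ᵀ := by
      simp only [transpose_mul, transpose_transpose, Matrix.mul_assoc]
    rw [inv_mul_of_invertible, transpose_one] at this
    rw [mulVec_mulVec, this, one_mulVec]
  have hyw : y ⬝ᵥ w = u ⬝ᵥ u := by
    rw [mulVec_dotProduct, transpose_mul, transpose_transpose]
  have hyQu : y ⬝ᵥ (Q *ᵥ u) = u ⬝ᵥ u := by
    rw [dotProduct_comm, mulVec_dotProduct, hQy]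
  have hQuw : (Q *ᵥ u) ⬝ᵥ w = 0 := by
    rw [mulVec_dotProduct, hw, dotProduct_zero]
  have hQuQu := mulVec_dotProduct_mulVec_self_of_transpose_mul_self hQ u
  have hyy : y ⬝ᵥ y ≤ g ^ 2 * (u ⬝ᵥ u) := by
    grw [mulVec_dotProduct_mulVec_self_le, l2_opNorm_mul_le_of_transpose_mul_self hP,
      l2_opNorm_transpose, hG] <;>
      exact real_dotProduct_self_nonneg u
  have hcs : (u ⬝ᵥ u) ^ 2 ≤ (g ^ 2 - 1) * (u ⬝ᵥ u) * (w ⬝ᵥ w) :=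
    calc (u ⬝ᵥ u) ^ 2 = ((y - Q *ᵥ u) ⬝ᵥ w) ^ 2 := by rw [sub_dotProduct, hyw, hQuw, sub_zero]
      _ ≤ (y - Q *ᵥ u) ⬝ᵥ (y - Q *ᵥ u) * (w ⬝ᵥ w) := sq_dotProduct_le _ _
      _ = (y ⬝ᵥ y - u ⬝ᵥ u) * (w ⬝ᵥ w) := by rw [sub_dotProduct_sub_self, hyQu, hQuQu]; ring
      _ ≤ (g ^ 2 - 1) * (u ⬝ᵥ u) * (w ⬝ᵥ w) := by
        gcongr
        · exact real_dotProduct_self_nonneg w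
        · linarith
  have hww := real_dotProduct_self_nonneg w
  rcases (real_dotProduct_self_nonneg u).eq_or_lt with huu | huu
  · rw [← huu]
    have : 1 ≤ g ^ 2 := one_le_pow₀ hg1
    nlinarith
  · exact le_of_mul_le_mul_left (by nlinarith) huu

theorem sub_obliqueProj_mulVec_dotProduct_self_le_of_orthogonal [DecidableEq m] (hQ : Qᵀ * Q = 1)
    (hP : Pᵀ * P = 1) [Invertible (Pᵀ * Q)] (hg1 : 1 ≤ g) (hG : ‖(Pᵀ * Q)⁻¹‖ ≤ g)
    {w : m → ℝ} (hw : Qᵀ *ᵥ w = 0) :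
    (w - (Q * (Pᵀ * Q)⁻¹ * Pᵀ) *ᵥ w) ⬝ᵥ (w - (Q * (Pᵀ * Q)⁻¹ * Pᵀ) *ᵥ w) ≤ g ^ 2 * (w ⬝ᵥ w) := by
  have hcoeff := obliqueCoeff_dotProduct_self_le_of_orthogonal hQ hP hg1 hG hw
  set u := ((Pᵀ * Q)⁻¹ * Pᵀ) *ᵥ w
  have hQu : (Q * (Pᵀ * Q)⁻¹ * Pᵀ) *ᵥ w = Q *ᵥ u := by
    rw [Matrix.mul_assoc, ← mulVec_mulVec]
  have hwQu : w ⬝ᵥ (Q *ᵥ u) = 0 := by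
    rw [dotProduct_comm, mulVec_dotProduct, hw, dotProduct_zero]
  rw [hQu, sub_dotProduct_sub_self, hwQu, mulVec_dotProduct_mulVec_self_of_transpose_mul_self hQ]
  linarith

theorem sub_obliqueProj_mulVec_dotProduct_self_le [DecidableEq m] (hQ : Qᵀ * Q = 1)
    (hP : Pᵀ * P = 1) [Invertible (Pᵀ * Q)] (hg1 : 1 ≤ g) (hG : ‖(Pᵀ * Q)⁻¹‖ ≤ g) (v : m → ℝ) :
    ((1 - Q * (Pᵀ * Q)⁻¹ * Pᵀ) *ᵥ v) ⬝ᵥ ((1 - Q * (Pᵀ * Q)⁻¹ * Pᵀ) *ᵥ v) ≤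
      g ^ 2 * (((1 - Q * Qᵀ) *ᵥ v) ⬝ᵥ ((1 - Q * Qᵀ) *ᵥ v)) := by
  have hw : Qᵀ *ᵥ ((1 - Q * Qᵀ) *ᵥ v) = 0 := by
    rw [mulVec_mulVec, Matrix.mul_sub, Matrix.mul_one, ← Matrix.mul_assoc, hQ, Matrix.one_mul,
      sub_self, zero_mulVec]
  have hres : (1 - Q * (Pᵀ * Q)⁻¹ * Pᵀ) * (1 - Q * Qᵀ) = 1 - Q * (Pᵀ * Q)⁻¹ * Pᵀ := by
    rw [Matrix.sub_mul, Matrix.mul_sub, Matrix.mul_sub, obliqueProj_mul_orthProj]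
    simp
  rw [← hres, ← mulVec_mulVec, sub_mulVec, one_mulVec]
  exact sub_obliqueProj_mulVec_dotProduct_self_le_of_orthogonal hQ hP hg1 hG hw

end ObliqueProjection

section Tensor

variable {N n : ℕ}

theorem frobT_eq_norm (X : (Fin N → Fin n) → ℝ) : frobT X = ‖WithLp.toLp 2 X‖ := by
  rw [frobT, EuclideanSpace.norm_eq]
  simp only [Real.norm_eq_abs, sq_abs]

theorem frobM_eq_sqrt_sum_col {ι κ : Type*} [Fintype ι] [Fintype κ] (M : Matrix ι κ ℝ) :
    frobM M = √(∑ c, Mᵀ c ⬝ᵥ Mᵀ c) := by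
  rw [frobM, Finset.sum_comm]
  simp only [dotProduct, transpose_apply, sq]

theorem transpose_mul_apply_eq_mulVec {ι ι' κ : Type*} [Fintype ι] (C : Matrix ι' ι ℝ)
    (M : Matrix ι κ ℝ) (k : κ) : (C * M)ᵀ k = C *ᵥ Mᵀ k := by
  ext i
  simp only [transpose_apply, mul_apply, mulVec, dotProduct]

theorem frobM_mul_le_of_mulVec_le {ι ι' ι'' κ : Type*} [Fintype ι] [Fintype ι'] [Fintype ι'']
    [Fintype κ] {A : Matrix ι' ι ℝ} {B : Matrix ι'' ι ℝ} {c : ℝ} (hc : 0 ≤ c)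
    (h : ∀ v, (A *ᵥ v) ⬝ᵥ (A *ᵥ v) ≤ c ^ 2 * ((B *ᵥ v) ⬝ᵥ (B *ᵥ v))) (M : Matrix ι κ ℝ) :
    frobM (A * M) ≤ c * frobM (B * M) := by
  rw [frobM_eq_sqrt_sum_col, frobM_eq_sqrt_sum_col, ← Real.sqrt_sq hc,
    ← Real.sqrt_mul (sq_nonneg c), Finset.mul_sum]
  gcongr with k
  rw [transpose_mul_apply_eq_mulVec, transpose_mul_apply_eq_mulVec]
  exact h _

theorem frobT_eq_frobM_unfold (X : (Fin N → Fin n) → ℝ) (j : Fin N) :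
    frobT X = frobM (unfold X j) := by
  rw [frobT, frobM, ← Fintype.sum_prod_type']
  congr 1
  refine Fintype.sum_equiv (Equiv.funSplitAt j (Fin n)) _ _ fun i => ?_
  have : (fun l => if h : l = j then i j else i l) = i := by
    funext l
    split_ifs with h
    · rw [h]
    · rfl
  simp only [Equiv.funSplitAt_apply, unfold, this]

theorem unfold_mprod (Y : (Fin N → Fin n) → ℝ) (j : Fin N) (A : Matrix (Fin n) (Fin n) ℝ) :
    unfold (mprod Y j A) j = A * unfold Y j := by
  ext a c
  simp only [unfold, mprod, mul_apply]
  refine Finset.sum_congr rfl fun k _ => ?_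
  have : Function.update (fun l => if h : l = j then a else c ⟨l, h⟩) j k =
      fun l => if h : l = j then k else c ⟨l, h⟩ := by
    funext l
    by_cases h : l = j
    · subst h; simp
    · simp [h]
  simp [this]

theorem frobT_mprod (Y : (Fin N → Fin n) → ℝ) (j : Fin N) (A : Matrix (Fin n) (Fin n) ℝ) :
    frobT (mprod Y j A) = frobM (A * unfold Y j) := by
  rw [frobT_eq_frobM_unfold _ j, unfold_mprod]

theorem frobT_mprod_le_of_mulVec_le {A B : Matrix (Fin n) (Fin n) ℝ} {c : ℝ} (hc : 0 ≤ c)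
    (h : ∀ v, (A *ᵥ v) ⬝ᵥ (A *ᵥ v) ≤ c ^ 2 * ((B *ᵥ v) ⬝ᵥ (B *ᵥ v)))
    (Y : (Fin N → Fin n) → ℝ) (j : Fin N) :
    frobT (mprod Y j A) ≤ c * frobT (mprod Y j B) := by
  rw [frobT_mprod, frobT_mprod]
  exact frobM_mul_le_of_mulVec_le hc h _

theorem mprod_one (Y : (Fin N → Fin n) → ℝ) (j : Fin N) : mprod Y j 1 = Y := by
  funext i
  simp [mprod, one_apply]

theorem mprod_sub (Y : (Fin N → Fin n) → ℝ) (j : Fin N) (A B : Matrix (Fin n) (Fin n) ℝ) :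
    mprod Y j (A - B) = mprod Y j A - mprod Y j B := by
  funext i
  simp [mprod, sub_mul]

theorem mprod_comm (Y : (Fin N → Fin n) → ℝ) {j k : Fin N} (hjk : j ≠ k)
    (A B : Matrix (Fin n) (Fin n) ℝ) :
    mprod (mprod Y j A) k B = mprod (mprod Y k B) j A := by
  funext i
  simp only [mprod, Finset.mul_sum]
  rw [Finset.sum_comm]
  refine Finset.sum_congr rfl fun a _ => Finset.sum_congr rfl fun b _ => ?_
  rw [Function.update_of_ne hjk, Function.update_of_ne hjk.symm, Function.update_comm hjk.symm]
  ring

variable (X : (Fin N → Fin n) → ℝ) (Pr : Fin N → Matrix (Fin n) (Fin n) ℝ)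

theorem prodUpTo_succ (j : Fin N) : prodUpTo X Pr (j + 1) = mprod (prodUpTo X Pr j) j (Pr j) := by
  rw [prodUpTo, dif_pos j.isLt]

theorem prodUpTo_mprod_comm (j : Fin N) (R : Matrix (Fin n) (Fin n) ℝ) {m : ℕ} (hm : m ≤ j) :
    prodUpTo (mprod X j R) Pr m = mprod (prodUpTo X Pr m) j R := by
  induction m with
  | zero => rfl
  | succ m ih =>
    have hmj : (⟨m, by omega⟩ : Fin N) ≠ j := Fin.ne_of_val_ne (by simp only; omega)
    rw [prodUpTo_succ _ _ ⟨m, by omega⟩, prodUpTo_succ _ _ ⟨m, by omega⟩, ih (by omega),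
      mprod_comm _ hmj.symm]

variable {X Pr} {c : ℝ}

theorem frobT_prodUpTo_le (hc : 0 ≤ c)
    (hPr : ∀ k v, (Pr k *ᵥ v) ⬝ᵥ (Pr k *ᵥ v) ≤ c ^ 2 * (v ⬝ᵥ v)) {m : ℕ} (hm : m ≤ N) :
    frobT (prodUpTo X Pr m) ≤ c ^ m * frobT X := by
  induction m with
  | zero => simp [prodUpTo]
  | succ m ih =>
    have hPr' : ∀ v, (Pr ⟨m, hm⟩ *ᵥ v) ⬝ᵥ (Pr ⟨m, hm⟩ *ᵥ v) ≤
        c ^ 2 * (((1 : Matrix (Fin n) (Fin n) ℝ) *ᵥ v) ⬝ᵥ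
          ((1 : Matrix (Fin n) (Fin n) ℝ) *ᵥ v)) := by
      simpa only [one_mulVec] using hPr ⟨m, hm⟩
    calc frobT (prodUpTo X Pr (m + 1))
        = frobT (mprod (prodUpTo X Pr m) ⟨m, hm⟩ (Pr ⟨m, hm⟩)) := by
          rw [prodUpTo_succ _ _ ⟨m, hm⟩]
      _ ≤ c * frobT (prodUpTo X Pr m) := by
          simpa only [mprod_one] using frobT_mprod_le_of_mulVec_le hc hPr' _ _
      _ ≤ c * (c ^ m * frobT X) := by gcongr; exact ih (by omega)
      _ = c ^ (m + 1) * frobT X := by ring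

theorem frobT_prodUpTo_sub_prodUpTo_succ_le (hc : 0 ≤ c)
    (hPr : ∀ k v, (Pr k *ᵥ v) ⬝ᵥ (Pr k *ᵥ v) ≤ c ^ 2 * (v ⬝ᵥ v)) (j : Fin N)
    {R : Matrix (Fin n) (Fin n) ℝ}
    (hR : ∀ v, ((1 - Pr j) *ᵥ v) ⬝ᵥ ((1 - Pr j) *ᵥ v) ≤ c ^ 2 * ((R *ᵥ v) ⬝ᵥ (R *ᵥ v))) :
    frobT (prodUpTo X Pr j - prodUpTo X Pr (j + 1)) ≤ c ^ (j + 1 : ℕ) * frobM (R * unfold X j) :=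
  calc frobT (prodUpTo X Pr j - prodUpTo X Pr (j + 1))
      = frobT (mprod (prodUpTo X Pr j) j (1 - Pr j)) := by
        rw [prodUpTo_succ, mprod_sub, mprod_one]
    _ ≤ c * frobT (mprod (prodUpTo X Pr j) j R) := frobT_mprod_le_of_mulVec_le hc hR _ _
    _ = c * frobT (prodUpTo (mprod X j R) Pr j) := by rw [prodUpTo_mprod_comm _ _ _ _ le_rfl]
    _ ≤ c * (c ^ (j : ℕ) * frobT (mprod X j R)) := by
        gcongr
        exact frobT_prodUpTo_le hc hPr j.isLt.le
    _ = c ^ (j + 1 : ℕ) * frobM (R * unfold X j) := by rw [frobT_mprod]; ring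

variable (X Pr)

theorem frobT_sub_prodUpTo_le_sum :
    frobT (X - prodUpTo X Pr N) ≤ ∑ j : Fin N, frobT (prodUpTo X Pr j - prodUpTo X Pr (j + 1)) := by
  simp only [frobT_eq_norm, WithLp.toLp_sub, ← dist_eq_norm]
  rw [Fin.sum_univ_eq_sum_range
    (fun t => dist (WithLp.toLp 2 (prodUpTo X Pr t)) (WithLp.toLp 2 (prodUpTo X Pr (t + 1))))]
  exact dist_le_range_sum_dist (fun t => WithLp.toLp 2 (prodUpTo X Pr t)) N

end Tensor

theorem tucker_interpolatory_error_bound_general {N n ℓ : ℕ}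
    (X : (Fin N → Fin n) → ℝ)
    (Q P : Fin N → Matrix (Fin n) (Fin ℓ) ℝ)
    (hQ : ∀ j, (Q j)ᵀ * Q j = (1 : Matrix (Fin ℓ) (Fin ℓ) ℝ))
    (hP : ∀ j, IsSelectionMatrix (P j))
    (hinv : ∀ j, Invertible ((P j)ᵀ * Q j))
    (g : ℝ) (hg1 : 1 ≤ g)
    (hg : ∀ j, matSpectralNorm (((P j)ᵀ * Q j)⁻¹) ≤ g) :
    frobT (X - prodUpTo X (fun j => Q j * ((P j)ᵀ * Q j)⁻¹ * (P j)ᵀ) N) ≤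
      ∑ j : Fin N, g ^ ((j : ℕ) + 1) *
        frobM (((1 : Matrix (Fin n) (Fin n) ℝ) - Q j * (Q j)ᵀ) * unfold X j) := by
  have hPP j := (hP j).transpose_mul_self
  have hg0 : 0 ≤ g := zero_le_one.trans hg1
  have hG j : ‖((P j)ᵀ * Q j)⁻¹‖ ≤ g := matSpectralNorm_eq_l2_opNorm _ ▸ hg j
  have hproj k := obliqueProj_mulVec_dotProduct_self_le (hQ k) (hPP k) (hG k)
  have hres j := have := hinv j; sub_obliqueProj_mulVec_dotProduct_self_le (hQ j) (hPP j) hg1 (hG j)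
  calc _ ≤ _ := frobT_sub_prodUpTo_le_sum X _
    _ ≤ _ := Finset.sum_le_sum fun j _ => frobT_prodUpTo_sub_prodUpTo_succ_le hg0 hproj j (hres j)

/-- Deterministic core of Theorem 3.1: with `Π_j = Q_j (P_jᵀ Q_j)⁻¹ P_jᵀ` and
`‖(P_jᵀ Q_j)⁻¹‖₂ ≤ g`, the error of the interpolatory Tucker approximation satisfies
`‖X − X ×₁ Π₁ ⋯ ×_N Π_N‖_F ≤ ∑_{j=1}^N g^j ‖(I − Q_j Q_jᵀ) X₍j₎‖_F`. -/
theorem tucker_interpolatory_error_bound {N n ℓ : ℕ}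
    (hN : 1 ≤ N) (hℓ : 1 ≤ ℓ) (hℓn : ℓ < n)
    (X : (Fin N → Fin n) → ℝ)
    (Q P : Fin N → Matrix (Fin n) (Fin ℓ) ℝ)
    (hQ : ∀ j, (Q j)ᵀ * Q j = (1 : Matrix (Fin ℓ) (Fin ℓ) ℝ))
    (hP : ∀ j, IsSelectionMatrix (P j))
    (hinv : ∀ j, Invertible ((P j)ᵀ * Q j))
    (g : ℝ) (hg1 : 1 ≤ g)
    (hg : ∀ j, matSpectralNorm (((P j)ᵀ * Q j)⁻¹) ≤ g) :
    frobT (X - prodUpTo X (fun j => Q j * ((P j)ᵀ * Q j)⁻¹ * (P j)ᵀ) N) ≤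
      ∑ j : Fin N, g ^ ((j : ℕ) + 1) *
        frobM (((1 : Matrix (Fin n) (Fin n) ℝ) - Q j * (Q j)ᵀ) * unfold X j) :=
  tucker_interpolatory_error_bound_general X Q P hQ hP hinv g hg1 hg
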